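/- Let R be a biinvertible n²×n² complex R-matrix with associated matrices U and V, and suppose there exists a nonzero complex number α such that VU = α²I. Then (PR, U, α⁻¹, α) and (RP, V, α⁻¹, α) are enhanced R-matrices in the sense of Definition 1. -/

import Mathlib

open scoped BigOperators

namespace Enhance

noncomputable section

/-- n×n complex matrices. -/
abbrev Mat1 (n : ℕ) := Matrix (Fin n) (Fin n) ℂ

/-- n²×n² complex matrices, indexed by pairs. -/
abbrev Mat2 (n : ℕ) := Matrix (Fin n × Fin n) (Fin n × Fin n) ℂ

/-- n³×n³ complex matrices, indexed by triples. -/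
abbrev Mat3 (n : ℕ) := Matrix (Fin n × Fin n × Fin n) (Fin n × Fin n × Fin n) ℂ

/-- Kronecker product of two n×n matrices: (μ⊗ν)^{ab}_{cd} = μ^a_c ν^b_d. -/
def kron {n : ℕ} (μ ν : Mat1 n) : Mat2 n :=
  Matrix.of fun p q => μ p.1 q.1 * ν p.2 q.2

/-- The permutation matrix P^{ab}_{cd} = δ^a_d δ^b_c. -/
def Pmat (n : ℕ) : Mat2 n :=
  Matrix.of fun p q => if p.1 = q.2 ∧ p.2 = q.1 then 1 else 0

/-- A₁₂ = A ⊗ I. -/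
def A12 {n : ℕ} (A : Mat2 n) : Mat3 n :=
  Matrix.of fun p q => A (p.1, p.2.1) (q.1, q.2.1) * (if p.2.2 = q.2.2 then 1 else 0)

/-- A₂₃ = I ⊗ A. -/
def A23 {n : ℕ} (A : Mat2 n) : Mat3 n :=
  Matrix.of fun p q => (if p.1 = q.1 then 1 else 0) * A (p.2.1, p.2.2) (q.2.1, q.2.2)

/-- (A₁₃)^{abc}_{def} = A^{ac}_{df} δ^b_e. -/
def A13 {n : ℕ} (A : Mat2 n) : Mat3 n :=
  Matrix.of fun p q => A (p.1, p.2.2) (q.1, q.2.2) * (if p.2.1 = q.2.1 then 1 else 0)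

/-- First partial transpose: (A^{t₁})^{ab}_{cd} = A^{cb}_{ad}. -/
def t1 {n : ℕ} (A : Mat2 n) : Mat2 n :=
  Matrix.of fun p q => A (q.1, p.2) (p.1, q.2)

/-- Second partial transpose: (A^{t₂})^{ab}_{cd} = A^{ad}_{cb}. -/
def t2 {n : ℕ} (A : Mat2 n) : Mat2 n :=
  Matrix.of fun p q => A (p.1, q.2) (q.1, p.2)

/-- Second partial trace: Tr₂(A)^a_c = Σ_d A^{ad}_{cd}. -/
def Tr2 {n : ℕ} (A : Mat2 n) : Mat1 n :=
  Matrix.of fun a c => ∑ d, A (a, d) (c, d)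

/-- The quantum Yang–Baxter equation R₁₂R₁₃R₂₃ = R₂₃R₁₃R₁₂. -/
def QYB {n : ℕ} (R : Mat2 n) : Prop :=
  A12 R * A13 R * A23 R = A23 R * A13 R * A12 R

/-- The braid equation S₁₂S₂₃S₁₂ = S₂₃S₁₂S₂₃. -/
def Braid {n : ℕ} (S : Mat2 n) : Prop :=
  A12 S * A23 S * A12 S = A23 S * A12 S * A23 S

/-- R is biinvertible if both R and R^{t₂} are invertible. -/
def Biinv {n : ℕ} (R : Mat2 n) : Prop :=
  IsUnit R ∧ IsUnit (t2 R)

/-- R̃ = ((R^{t₂})⁻¹)^{t₂}. -/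
noncomputable def Rtil {n : ℕ} (R : Mat2 n) : Mat2 n := t2 (t2 R)⁻¹

/-- U^i_j = Σ_a R̃^{ai}_{ja}. -/
noncomputable def Umat {n : ℕ} (R : Mat2 n) : Mat1 n :=
  Matrix.of fun i j => ∑ a, Rtil R (a, i) (j, a)

/-- V^i_j = Σ_a R̃^{ia}_{aj}. -/
noncomputable def Vmat {n : ℕ} (R : Mat2 n) : Mat1 n :=
  Matrix.of fun i j => ∑ a, Rtil R (i, a) (a, j)

/-- Enhanced R-matrix in the sense of Definition 2 (Turaev, tangle category version). -/
def IsEnhanced2 {n : ℕ} (S : Mat2 n) (μ : Mat1 n) : Prop :=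
  IsUnit S ∧ IsUnit μ ∧ Braid S ∧
  S * kron μ μ = kron μ μ * S ∧
  Tr2 (S * kron 1 μ) = 1 ∧ Tr2 (S⁻¹ * kron 1 μ) = 1 ∧
  t1 (Pmat n * S⁻¹) * kron 1 μ * t1 (S * Pmat n) * kron 1 μ⁻¹ = 1 ∧
  t1 (Pmat n * S) * kron 1 μ * t1 (S⁻¹ * Pmat n) * kron 1 μ⁻¹ = 1

/-- Enhanced R-matrix in the sense of Definition 1 (Turaev, link invariant version). -/
def IsEnhanced1 {n : ℕ} (S : Mat2 n) (μ : Mat1 n) (α β : ℂ) : Prop :=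
  IsUnit S ∧ α ≠ 0 ∧ β ≠ 0 ∧ Braid S ∧
  S * kron μ μ = kron μ μ * S ∧
  Tr2 (S * kron μ μ) = (α * β) • μ ∧
  Tr2 (S⁻¹ * kron μ μ) = (α⁻¹ * β) • μ

/-!
The heart of the proof is the identity `R̃ (1 ⊗ U) R = 1 ⊗ U`, obtained by contracting the
entrywise QYB equation four times against `R̃` and then taking a partial trace, which produces
`U`. Applied to `P Rᵀ P`, whose `U` is `Uᵀ`, the identity gives `R (U ⊗ 1) R̃ = U ⊗ 1`, and the
two together show that `R`, hence `PR`, commutes with `U ⊗ U`. The trace conditions for `PR`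
then reduce to `Tr₂ (P (U ⊗ 1) R) = 1` and `Tr₂ (R̃ (1 ⊗ U) P) = V U = α² I`. The statement for
`(RP, V)` is the one for `(PR, U)` applied to `P R P`, whose `U` and `V` are `V` and `U` of `R`.
-/

variable {n : ℕ}

open Matrix

lemma commute_nonsing_inv_left {m α : Type*} [Fintype m] [DecidableEq m] [CommRing α]
    {A B : Matrix m m α} (hA : IsUnit A) (h : Commute A B) : Commute A⁻¹ B := by
  obtain ⟨u, rfl⟩ := hA
  rw [← coe_units_inv]
  exact h.units_inv_left

lemma mul_eq_smul_one_comm {m K : Type*} [Fintype m] [DecidableEq m] [Field K]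
    {A B : Matrix m m K} {c : K} (hc : c ≠ 0) (h : A * B = c • 1) : B * A = c • 1 := by
  have hinv : (c⁻¹ • A) * B = 1 := by
    rw [smul_mul_assoc, h, smul_smul, inv_mul_cancel₀ hc, one_smul]
  rw [← one_smul K (B * A), ← mul_inv_cancel₀ hc, mul_smul, ← mul_smul_comm,
    mul_eq_one_comm.mp hinv]

section Basics

lemma mul_apply_prod (A B : Mat2 n) (p q : Fin n × Fin n) :
    (A * B) p q = ∑ e, ∑ f, A p (e, f) * B (e, f) q := by
  rw [mul_apply, Fintype.sum_prod_type]

lemma kron_mul_kron (A B C D : Mat1 n) : kron A B * kron C D = kron (A * C) (B * D) := by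
  ext p q
  rw [mul_apply_prod]
  simp only [kron, of_apply, mul_apply, Finset.sum_mul_sum]
  exact Finset.sum_congr rfl fun e _ => Finset.sum_congr rfl fun f _ => by ring

lemma kron_transpose (A B : Mat1 n) : (kron A B)ᵀ = kron Aᵀ Bᵀ := by
  ext p q; simp [kron]

lemma Pmat_mul_apply (M : Mat2 n) (p q : Fin n × Fin n) : (Pmat n * M) p q = M p.swap q := by
  simp [mul_apply_prod, Pmat, ite_and]
  rfl

lemma mul_Pmat_apply (M : Mat2 n) (p q : Fin n × Fin n) : (M * Pmat n) p q = M p q.swap := by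
  simp [mul_apply_prod, Pmat, ite_and]
  rfl

lemma Pmat_mul_Pmat : Pmat n * Pmat n = 1 := by
  ext p q
  rw [Pmat_mul_apply]
  simp [Pmat, one_apply, Prod.ext_iff, and_comm]

lemma inv_Pmat : (Pmat n)⁻¹ = Pmat n := inv_eq_right_inv Pmat_mul_Pmat

lemma isUnit_Pmat : IsUnit (Pmat n) :=
  ⟨⟨Pmat n, Pmat n, Pmat_mul_Pmat, Pmat_mul_Pmat⟩, rfl⟩

lemma Pmat_mul_kron (A B : Mat1 n) : Pmat n * kron A B = kron B A * Pmat n := by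
  ext p q
  simp [Pmat_mul_apply, mul_Pmat_apply, kron, mul_comm]

lemma Pmat_mul_Pmat_mul_Pmat (A : Mat2 n) : Pmat n * (Pmat n * A * Pmat n) = A * Pmat n := by
  rw [← mul_assoc, ← mul_assoc, Pmat_mul_Pmat, one_mul]

lemma t2_t2 (A : Mat2 n) : t2 (t2 A) = A := by
  ext p q; simp [t2]

lemma t2_transpose (A : Mat2 n) : t2 Aᵀ = (t2 A)ᵀ := by
  ext p q; simp [t2]

lemma t2_conj_Pmat (A : Mat2 n) : t2 (Pmat n * A * Pmat n) = Pmat n * (t2 A)ᵀ * Pmat n := by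
  ext p q; simp [t2, Pmat_mul_apply, mul_Pmat_apply]

lemma Tr2_kron_one_mul (A : Mat1 n) (M : Mat2 n) : Tr2 (kron A 1 * M) = A * Tr2 M := by
  ext a c
  have entry : ∀ d, (kron A 1 * M) (a, d) (c, d) = ∑ e, A a e * M (e, d) (c, d) := fun d => by
    simp [mul_apply_prod, kron, one_apply]
  calc Tr2 (kron A 1 * M) a c = ∑ d, ∑ e, A a e * M (e, d) (c, d) :=
        Fintype.sum_congr _ _ entry
    _ = (A * Tr2 M) a c := by
        simp only [mul_apply, Tr2, of_apply, Finset.mul_sum]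
        exact Finset.sum_comm

lemma Pmat_mul_kron_mul_Pmat (A B : Mat1 n) : Pmat n * kron A B * Pmat n = kron B A := by
  rw [Pmat_mul_kron, mul_assoc, Pmat_mul_Pmat, mul_one]

lemma conj_Pmat_conj_Pmat (A : Mat2 n) : Pmat n * (Pmat n * A * Pmat n) * Pmat n = A := by
  simp only [← mul_assoc, Pmat_mul_Pmat, one_mul]
  rw [mul_assoc, Pmat_mul_Pmat, mul_one]

end Basics

variable {R : Mat2 n}

section Rtil

lemma t2_Rtil_mul_t2 (h : IsUnit (t2 R)) : t2 (Rtil R) * t2 R = 1 := by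
  rw [Rtil, t2_t2]
  exact nonsing_inv_mul _ ((isUnit_iff_isUnit_det _).mp h)

lemma t2_mul_t2_Rtil (h : IsUnit (t2 R)) : t2 R * t2 (Rtil R) = 1 := by
  rw [Rtil, t2_t2]
  exact mul_nonsing_inv _ ((isUnit_iff_isUnit_det _).mp h)

lemma sum_Rtil_mul (h : IsUnit (t2 R)) (a b c d : Fin n) :
    ∑ e, ∑ f, Rtil R (a, f) (e, b) * R (e, d) (c, f) = if a = c ∧ b = d then 1 else 0 := by
  simpa [mul_apply_prod, t2, one_apply, Prod.ext_iff] using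
    congrFun₂ (t2_Rtil_mul_t2 h) (a, b) (c, d)

lemma sum_mul_Rtil (h : IsUnit (t2 R)) (a b c d : Fin n) :
    ∑ e, ∑ f, R (a, f) (e, b) * Rtil R (e, d) (c, f) = if a = c ∧ b = d then 1 else 0 := by
  simpa [mul_apply_prod, t2, one_apply, Prod.ext_iff] using
    congrFun₂ (t2_mul_t2_Rtil h) (a, b) (c, d)

lemma Rtil_transpose : Rtil Rᵀ = (Rtil R)ᵀ := by
  rw [Rtil, Rtil, t2_transpose, ← transpose_nonsing_inv, t2_transpose]

lemma Rtil_conj_Pmat : Rtil (Pmat n * R * Pmat n) = Pmat n * Rtil R * Pmat n := by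
  rw [Rtil, t2_conj_Pmat, Matrix.mul_inv_rev, Matrix.mul_inv_rev, inv_Pmat, ← mul_assoc,
    ← transpose_nonsing_inv, t2_conj_Pmat, t2_transpose, transpose_transpose, Rtil]

lemma Umat_conj_Pmat : Umat (Pmat n * R * Pmat n) = Vmat R := by
  ext i j; simp [Umat, Vmat, Rtil_conj_Pmat, Pmat_mul_apply, mul_Pmat_apply]

lemma Vmat_conj_Pmat : Vmat (Pmat n * R * Pmat n) = Umat R := by
  ext i j; simp [Umat, Vmat, Rtil_conj_Pmat, Pmat_mul_apply, mul_Pmat_apply]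

lemma Vmat_transpose : Vmat Rᵀ = (Umat R)ᵀ := by
  ext i j; simp [Umat, Vmat, Rtil_transpose]

lemma isUnit_t2_transpose (h : IsUnit (t2 R)) : IsUnit (t2 Rᵀ) := by
  rwa [t2_transpose, isUnit_transpose]

lemma isUnit_t2_conj_Pmat (h : IsUnit (t2 R)) :
    IsUnit (t2 (Pmat n * R * Pmat n)) := by
  rw [t2_conj_Pmat]
  exact (isUnit_Pmat.mul ((isUnit_transpose _).mpr h)).mul isUnit_Pmat


end Rtil

section YangBaxter

lemma mul_mul_apply_triple (A B C : Mat3 n) (p q : Fin n × Fin n × Fin n) :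
    (A * B * C) p q = ∑ x, ∑ y, A p x * B x y * C y q := by
  rw [mul_apply, Finset.sum_comm]
  exact Finset.sum_congr rfl fun x _ => by rw [mul_apply, Finset.sum_mul]

lemma A12_mul_A13_mul_A23_apply (a b c d e f : Fin n) :
    (A12 R * A13 R * A23 R) (a, b, c) (d, e, f)
      = ∑ p, ∑ y, ∑ z, R (a, b) (p, y) * R (p, c) (d, z) * R (y, z) (e, f) := by
  rw [mul_mul_apply_triple]
  simp [Fintype.sum_prod_type, A12, A13, A23, mul_ite, ite_mul, Finset.sum_ite_irrel]

lemma A23_mul_A13_mul_A12_apply (a b c d e f : Fin n) :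
    (A23 R * A13 R * A12 R) (a, b, c) (d, e, f)
      = ∑ y, ∑ w, ∑ x, R (b, c) (y, w) * R (a, w) (x, f) * R (x, y) (d, e) := by
  rw [mul_mul_apply_triple]
  simp [Fintype.sum_prod_type, A12, A13, A23, mul_ite, ite_mul, Finset.sum_ite_irrel]

lemma QYB_iff : QYB R ↔ ∀ a b c d e f : Fin n,
    ∑ p, ∑ y, ∑ z, R (a, b) (p, y) * R (p, c) (d, z) * R (y, z) (e, f)
      = ∑ y, ∑ w, ∑ x, R (b, c) (y, w) * R (a, w) (x, f) * R (x, y) (d, e) := by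
  simp only [QYB, ← Matrix.ext_iff, Prod.forall, A12_mul_A13_mul_A23_apply,
    A23_mul_A13_mul_A12_apply]

lemma A12_transpose (A : Mat2 n) : A12 Aᵀ = (A12 A)ᵀ := by
  ext p q; simp [A12, eq_comm]

lemma A13_transpose (A : Mat2 n) : A13 Aᵀ = (A13 A)ᵀ := by
  ext p q; simp [A13, eq_comm]

lemma A23_transpose (A : Mat2 n) : A23 Aᵀ = (A23 A)ᵀ := by
  ext p q; simp [A23, eq_comm]

lemma QYB.transpose (h : QYB R) : QYB Rᵀ := by
  simp only [QYB, A12_transpose, A13_transpose, A23_transpose, ← transpose_mul, ← mul_assoc]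
  rw [h]

lemma QYB.conj_Pmat (h : QYB R) : QYB (Pmat n * R * Pmat n) := by
  rw [QYB_iff] at h ⊢
  intro a b c d e f
  simp only [Pmat_mul_apply, mul_Pmat_apply, Prod.swap_prod_mk]
  rw [Finset.sum_comm, ← h c b a f e d, Finset.sum_comm]

end YangBaxter

section Braid

lemma A12_mul_A12 (A B : Mat2 n) : A12 A * A12 B = A12 (A * B) := by
  ext p q
  rw [mul_apply]
  simp [A12, Fintype.sum_prod_type, mul_apply_prod, mul_ite, ite_mul,
    Finset.sum_ite_irrel]

lemma A23_mul_A23 (A B : Mat2 n) : A23 A * A23 B = A23 (A * B) := by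
  ext p q
  rw [mul_apply]
  simp [A23, Fintype.sum_prod_type, mul_apply_prod, Finset.mul_sum, mul_ite, ite_mul,
    Finset.sum_ite_irrel]

lemma A12_Pmat_mul_apply (M : Mat3 n) (p q : Fin n × Fin n × Fin n) :
    (A12 (Pmat n) * M) p q = M (p.2.1, p.1, p.2.2) q := by
  simp [mul_apply, Fintype.sum_prod_type, A12, Pmat, ite_and]

lemma mul_A12_Pmat_apply (M : Mat3 n) (p q : Fin n × Fin n × Fin n) :
    (M * A12 (Pmat n)) p q = M p (q.2.1, q.1, q.2.2) := by
  simp [mul_apply, Fintype.sum_prod_type, A12, Pmat, ite_and]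

lemma A23_Pmat_mul_apply (M : Mat3 n) (p q : Fin n × Fin n × Fin n) :
    (A23 (Pmat n) * M) p q = M (p.1, p.2.2, p.2.1) q := by
  simp [mul_apply, Fintype.sum_prod_type, A23, Pmat, ite_and]

lemma mul_A23_Pmat_apply (M : Mat3 n) (p q : Fin n × Fin n × Fin n) :
    (M * A23 (Pmat n)) p q = M p (q.1, q.2.2, q.2.1) := by
  simp [mul_apply, Fintype.sum_prod_type, A23, Pmat, ite_and]

lemma A12_mul_A23_Pmat (X : Mat2 n) : A12 X * A23 (Pmat n) = A23 (Pmat n) * A13 X := by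
  ext p q
  simp [mul_A23_Pmat_apply, A23_Pmat_mul_apply, A12, A13]

lemma A23_mul_A12_Pmat (X : Mat2 n) : A23 X * A12 (Pmat n) = A12 (Pmat n) * A13 X := by
  ext p q
  simp [mul_A12_Pmat_apply, A12_Pmat_mul_apply, A23, A13, mul_comm]

lemma A13_mul_A12_Pmat (X : Mat2 n) : A13 X * A12 (Pmat n) = A12 (Pmat n) * A23 X := by
  ext p q
  simp [mul_A12_Pmat_apply, A12_Pmat_mul_apply, A23, A13, mul_comm]

lemma A13_mul_A23_Pmat (X : Mat2 n) : A13 X * A23 (Pmat n) = A23 (Pmat n) * A12 X := by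
  ext p q
  simp [mul_A23_Pmat_apply, A23_Pmat_mul_apply, A12, A13]

lemma braid_Pmat : Braid (Pmat n) := by
  rw [Braid, A12_mul_A23_Pmat, mul_assoc, A13_mul_A12_Pmat, ← mul_assoc]

lemma braid_Pmat_mul (hq : QYB R) : Braid (Pmat n * R) := by
  have slide : ∀ {X Y Z : Mat3 n}, X * Y = Y * Z → ∀ M, X * (Y * M) = Y * (Z * M) :=
    fun h M => by rw [← mul_assoc, h, mul_assoc]
  have hqyb : A12 R * (A13 R * A23 R) = A23 R * (A13 R * A12 R) := by
    rw [← mul_assoc, ← mul_assoc, hq]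
  have hP : ∀ M, A12 (Pmat n) * (A23 (Pmat n) * (A12 (Pmat n) * M))
      = A23 (Pmat n) * (A12 (Pmat n) * (A23 (Pmat n) * M)) := fun M => by
    rw [← mul_assoc, ← mul_assoc, braid_Pmat, mul_assoc, mul_assoc]
  rw [Braid, ← A12_mul_A12, ← A23_mul_A23]
  simp only [mul_assoc]
  rw [slide (A12_mul_A23_Pmat R), slide (A23_mul_A12_Pmat R), slide (A13_mul_A12_Pmat R),
    slide (A23_mul_A12_Pmat R), slide (A12_mul_A23_Pmat R), slide (A13_mul_A23_Pmat R), ← hqyb, hP]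

end Braid

section SumRotation

variable {α M : Type*} [Fintype α] [AddCommMonoid M]

lemma sum_rotate3 (f : α → α → α → M) :
    ∑ a, ∑ b, ∑ c, f a b c = ∑ b, ∑ c, ∑ a, f a b c := by
  rw [Finset.sum_comm]
  exact Finset.sum_congr rfl fun b _ => Finset.sum_comm

lemma sum_rotate4 (f : α → α → α → α → M) :
    ∑ a, ∑ b, ∑ c, ∑ d, f a b c d = ∑ b, ∑ c, ∑ d, ∑ a, f a b c d := by
  rw [Finset.sum_comm]
  exact Finset.sum_congr rfl fun b _ => sum_rotate3 _

lemma sum_rotate5 (f : α → α → α → α → α → M) :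
    ∑ a, ∑ b, ∑ c, ∑ d, ∑ e, f a b c d e = ∑ b, ∑ c, ∑ d, ∑ e, ∑ a, f a b c d e := by
  rw [Finset.sum_comm]
  exact Finset.sum_congr rfl fun b _ => sum_rotate4 _

lemma sum_rotate6 (f : α → α → α → α → α → α → M) :
    ∑ a, ∑ b, ∑ c, ∑ d, ∑ e, ∑ g, f a b c d e g
      = ∑ b, ∑ c, ∑ d, ∑ e, ∑ g, ∑ a, f a b c d e g := by
  rw [Finset.sum_comm]
  exact Finset.sum_congr rfl fun b _ => sum_rotate5 _

lemma sum_rotate7 (f : α → α → α → α → α → α → α → M) :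
    ∑ a, ∑ b, ∑ c, ∑ d, ∑ e, ∑ g, ∑ h, f a b c d e g h
      = ∑ b, ∑ c, ∑ d, ∑ e, ∑ g, ∑ h, ∑ a, f a b c d e g h := by
  rw [Finset.sum_comm]
  exact Finset.sum_congr rfl fun b _ => sum_rotate6 _

end SumRotation

/- `qyb_contract_k` is the entrywise QYB equation contracted `k` times against `R̃`: each
contraction collapses a pair `R`, `R̃` on one side to Kronecker deltas (`sum_Rtil_mul`,
`sum_mul_Rtil`), so one factor `R` moves across the equation as an `R̃`. -/
lemma qyb_contract_one (hq : QYB R) (ht : IsUnit (t2 R)) (a b c₁ d₁ e f : Fin n) :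
    ∑ y, R (a, b) (c₁, y) * R (y, d₁) (e, f)
      = ∑ d, ∑ c, (∑ y, ∑ w, ∑ x, R (b, c) (y, w) * R (a, w) (x, f) * R (x, y) (d, e))
          * Rtil R (d, d₁) (c₁, c) := by
  symm
  calc _ = ∑ d, ∑ c, (∑ p, ∑ y, ∑ z, R (a, b) (p, y) * R (p, c) (d, z) * R (y, z) (e, f))
          * Rtil R (d, d₁) (c₁, c) := by simp_rw [QYB_iff.mp hq]
    _ = ∑ p, ∑ y, ∑ z, R (a, b) (p, y) * R (y, z) (e, f)
          * ∑ d, ∑ c, R (p, c) (d, z) * Rtil R (d, d₁) (c₁, c) := by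
        simp only [Finset.sum_mul, Finset.mul_sum]
        rw [sum_rotate5, sum_rotate5]
        congr! 5 with p y z d c
        ring
    _ = ∑ p, ∑ y, ∑ z, R (a, b) (p, y) * R (y, z) (e, f) * if p = c₁ ∧ z = d₁ then 1 else 0 := by
        simp_rw [sum_mul_Rtil ht]
    _ = _ := by simp [ite_and]

lemma qyb_contract_two (hq : QYB R) (ht : IsUnit (t2 R)) (b c₁ d₁ e f₁ f₂ : Fin n) :
    ∑ a, ∑ f, ∑ y, Rtil R (f₁, f) (a, f₂) * R (a, b) (c₁, y) * R (y, d₁) (e, f)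
      = ∑ d, ∑ c, ∑ y, R (b, c) (y, f₂) * R (f₁, y) (d, e) * Rtil R (d, d₁) (c₁, c) := by
  calc _ = ∑ a, ∑ f, Rtil R (f₁, f) (a, f₂) * ∑ y, R (a, b) (c₁, y) * R (y, d₁) (e, f) := by
        simp_rw [Finset.mul_sum, mul_assoc]
    _ = ∑ a, ∑ f, Rtil R (f₁, f) (a, f₂) * ∑ d, ∑ c,
          (∑ y, ∑ w, ∑ x, R (b, c) (y, w) * R (a, w) (x, f) * R (x, y) (d, e))
            * Rtil R (d, d₁) (c₁, c) := by
        simp_rw [qyb_contract_one hq ht]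
    _ = ∑ d, ∑ c, ∑ y, ∑ w, ∑ x, R (b, c) (y, w) * R (x, y) (d, e) * Rtil R (d, d₁) (c₁, c)
          * ∑ a, ∑ f, Rtil R (f₁, f) (a, f₂) * R (a, w) (x, f) := by
        simp only [Finset.sum_mul, Finset.mul_sum]
        rw [sum_rotate7, sum_rotate7]
        congr! 7
        ring
    _ = ∑ d, ∑ c, ∑ y, ∑ w, ∑ x, R (b, c) (y, w) * R (x, y) (d, e) * Rtil R (d, d₁) (c₁, c)
          * if f₁ = x ∧ f₂ = w then 1 else 0 := by
        simp_rw [sum_Rtil_mul ht]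
    _ = _ := by simp [ite_and]

lemma qyb_contract_three (hq : QYB R) (ht : IsUnit (t2 R)) (b c₁ d₂ e₁ f₁ f₂ : Fin n) :
    ∑ a, Rtil R (f₁, e₁) (a, f₂) * R (a, b) (c₁, d₂)
      = ∑ e, ∑ k, (∑ d, ∑ c, ∑ y, R (b, c) (y, f₂) * R (f₁, y) (d, e) * Rtil R (d, k) (c₁, c))
          * Rtil R (e, e₁) (d₂, k) := by
  symm
  calc _ = ∑ e, ∑ k, (∑ a, ∑ f, ∑ y, Rtil R (f₁, f) (a, f₂) * R (a, b) (c₁, y) * R (y, k) (e, f))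
          * Rtil R (e, e₁) (d₂, k) := by
        simp_rw [qyb_contract_two hq ht]
    _ = ∑ a, ∑ f, ∑ y, Rtil R (f₁, f) (a, f₂) * R (a, b) (c₁, y)
          * ∑ e, ∑ k, R (y, k) (e, f) * Rtil R (e, e₁) (d₂, k) := by
        simp only [Finset.sum_mul, Finset.mul_sum]
        rw [sum_rotate5, sum_rotate5]
        congr! 5
        ring
    _ = ∑ a, ∑ f, ∑ y, Rtil R (f₁, f) (a, f₂) * R (a, b) (c₁, y)
          * if y = d₂ ∧ f = e₁ then 1 else 0 := by
        simp_rw [sum_mul_Rtil ht]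
    _ = _ := by simp [ite_and]

lemma qyb_contract_four (hq : QYB R) (ht : IsUnit (t2 R)) (c₁ d₂ e₁ f₁ g h : Fin n) :
    ∑ a, ∑ b, ∑ f, Rtil R (g, f) (b, h) * Rtil R (f₁, e₁) (a, f) * R (a, b) (c₁, d₂)
      = ∑ e, ∑ k, ∑ d, R (f₁, g) (d, e) * Rtil R (d, k) (c₁, h) * Rtil R (e, e₁) (d₂, k) := by
  calc _ = ∑ b, ∑ f, Rtil R (g, f) (b, h) * ∑ a, Rtil R (f₁, e₁) (a, f) * R (a, b) (c₁, d₂) := by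
        rw [sum_rotate3]
        simp_rw [Finset.mul_sum, mul_assoc]
    _ = ∑ b, ∑ f, Rtil R (g, f) (b, h) * ∑ e, ∑ k,
          (∑ d, ∑ c, ∑ y, R (b, c) (y, f) * R (f₁, y) (d, e) * Rtil R (d, k) (c₁, c))
            * Rtil R (e, e₁) (d₂, k) := by
        simp_rw [qyb_contract_three hq ht]
    _ = ∑ e, ∑ k, ∑ d, ∑ c, ∑ y, R (f₁, y) (d, e) * Rtil R (d, k) (c₁, c) * Rtil R (e, e₁) (d₂, k)
          * ∑ b, ∑ f, Rtil R (g, f) (b, h) * R (b, c) (y, f) := by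
        simp only [Finset.sum_mul, Finset.mul_sum]
        rw [sum_rotate7, sum_rotate7]
        congr! 7
        ring
    _ = ∑ e, ∑ k, ∑ d, ∑ c, ∑ y, R (f₁, y) (d, e) * Rtil R (d, k) (c₁, c) * Rtil R (e, e₁) (d₂, k)
          * if g = y ∧ h = c then 1 else 0 := by
        simp_rw [sum_Rtil_mul ht]
    _ = _ := by simp [ite_and]

lemma Rtil_mul_kron_one_Umat_mul (hq : QYB R) (ht : IsUnit (t2 R)) :
    Rtil R * kron 1 (Umat R) * R = kron 1 (Umat R) := by
  ext ⟨f₁, e₁⟩ ⟨c₁, d₂⟩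
  calc (Rtil R * kron 1 (Umat R) * R) (f₁, e₁) (c₁, d₂)
      = ∑ h, ∑ a, ∑ b, ∑ f, Rtil R (h, f) (b, h) * Rtil R (f₁, e₁) (a, f) * R (a, b) (c₁, d₂) := by
        simp [mul_apply_prod, kron, one_apply, Umat, Finset.sum_mul, Finset.mul_sum]
        conv_rhs => rw [sum_rotate4]
        congr! 4
        ring
    _ = ∑ h, ∑ e, ∑ k, ∑ d, R (f₁, h) (d, e) * Rtil R (d, k) (c₁, h) * Rtil R (e, e₁) (d₂, k) := by
        simp_rw [qyb_contract_four hq ht]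
    _ = ∑ e, ∑ k, Rtil R (e, e₁) (d₂, k) * ∑ d, ∑ h, R (f₁, h) (d, e) * Rtil R (d, k) (c₁, h) := by
        simp only [Finset.mul_sum]
        rw [sum_rotate4]
        congr! 4
        ring
    _ = ∑ e, ∑ k, Rtil R (e, e₁) (d₂, k) * if f₁ = c₁ ∧ e = k then 1 else 0 := by
        simp_rw [sum_mul_Rtil ht]
    _ = kron 1 (Umat R) (f₁, e₁) (c₁, d₂) := by
        simp [kron, one_apply, Umat, ite_and]

lemma mul_kron_Umat_one_mul_Rtil (hq : QYB R) (ht : IsUnit (t2 R)) :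
    R * kron (Umat R) 1 * Rtil R = kron (Umat R) 1 := by
  have h := Rtil_mul_kron_one_Umat_mul hq.transpose.conj_Pmat
    (isUnit_t2_conj_Pmat (isUnit_t2_transpose ht))
  rw [Rtil_conj_Pmat, Umat_conj_Pmat, Rtil_transpose, Vmat_transpose] at h
  have hconj : Pmat n * ((Rtil R)ᵀ * kron (Umat R)ᵀ 1 * Rᵀ) * Pmat n = kron 1 (Umat R)ᵀ := by
    rw [← h, ← Pmat_mul_kron_mul_Pmat 1 (Umat R)ᵀ]
    simp only [mul_assoc]
  apply transpose_injective
  rw [transpose_mul, transpose_mul, kron_transpose, transpose_one, ← mul_assoc,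
    ← conj_Pmat_conj_Pmat ((Rtil R)ᵀ * _ * _), hconj, Pmat_mul_kron_mul_Pmat]

lemma commute_kron_Umat (hq : QYB R) (ht : IsUnit (t2 R)) :
    Commute R (kron (Umat R) (Umat R)) := by
  have split : kron (Umat R) (Umat R) = kron (Umat R) 1 * kron 1 (Umat R) := by
    rw [kron_mul_kron, mul_one, one_mul]
  calc R * kron (Umat R) (Umat R)
      = R * kron (Umat R) 1 * (Rtil R * kron 1 (Umat R) * R) := by
        rw [Rtil_mul_kron_one_Umat_mul hq ht, split, mul_assoc]
    _ = R * kron (Umat R) 1 * Rtil R * kron 1 (Umat R) * R := by simp only [mul_assoc]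
    _ = kron (Umat R) (Umat R) * R := by rw [mul_kron_Umat_one_mul_Rtil hq ht, split]

lemma Tr2_Pmat_mul_kron_Umat_one_mul (ht : IsUnit (t2 R)) :
    Tr2 (Pmat n * (kron (Umat R) 1 * R)) = 1 := by
  ext a c
  calc Tr2 (Pmat n * (kron (Umat R) 1 * R)) a c
      = ∑ g, ∑ x, ∑ d, Rtil R (g, d) (x, g) * R (x, a) (c, d) := by
        simp only [Tr2, of_apply, Pmat_mul_apply]
        simp [mul_apply_prod, kron, one_apply, Umat, Finset.sum_mul]
        rw [← sum_rotate3]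
        exact Finset.sum_congr rfl fun g _ => Finset.sum_comm
    _ = ∑ g, if g = c ∧ g = a then 1 else 0 := by simp_rw [sum_Rtil_mul ht]
    _ = (1 : Mat1 n) a c := by simp [ite_and, one_apply, eq_comm]

lemma Tr2_Rtil_mul_kron_one_mul_Pmat (A : Mat1 n) :
    Tr2 (Rtil R * kron 1 A * Pmat n) = Vmat R * A := by
  ext a c
  simp only [Tr2, of_apply, mul_Pmat_apply, Prod.swap_prod_mk]
  simp only [mul_apply_prod]
  simp [kron, one_apply, Vmat, mul_apply, Finset.sum_mul]
  exact Finset.sum_comm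

lemma Biinv.conj_Pmat (h : Biinv R) : Biinv (Pmat n * R * Pmat n) :=
  ⟨(isUnit_Pmat.mul h.1).mul isUnit_Pmat, isUnit_t2_conj_Pmat h.2⟩

lemma kron_one_Umat_mul_inv (hq : QYB R) (hbi : Biinv R) :
    kron 1 (Umat R) * R⁻¹ = Rtil R * kron 1 (Umat R) := by
  conv_lhs => rw [← Rtil_mul_kron_one_Umat_mul hq hbi.2]
  rw [mul_assoc _ R, mul_nonsing_inv _ ((isUnit_iff_isUnit_det R).mp hbi.1), mul_one]

theorem isEnhanced1_Pmat_mul (hq : QYB R) (hbi : Biinv R) {α : ℂ} (hα : α ≠ 0)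
    (hVU : Vmat R * Umat R = α ^ 2 • (1 : Mat1 n)) :
    IsEnhanced1 (Pmat n * R) (Umat R) α⁻¹ α := by
  have hS : IsUnit (Pmat n * R) := isUnit_Pmat.mul hbi.1
  have hcomm : Commute (Pmat n * R) (kron (Umat R) (Umat R)) :=
    Commute.mul_left (Pmat_mul_kron (Umat R) (Umat R)) (commute_kron_Umat hq hbi.2)
  have split : kron (Umat R) (Umat R) = kron (Umat R) 1 * kron 1 (Umat R) := by
    rw [kron_mul_kron, mul_one, one_mul]
  refine ⟨hS, inv_ne_zero hα, hα, braid_Pmat_mul hq, hcomm.eq, ?_, ?_⟩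
  · rw [inv_mul_cancel₀ hα, one_smul, hcomm.eq, split, mul_assoc, ← mul_assoc (kron 1 _),
      ← Pmat_mul_kron, mul_assoc, Tr2_kron_one_mul, Tr2_Pmat_mul_kron_Umat_one_mul hbi.2, mul_one]
  · rw [inv_inv, ← sq, (commute_nonsing_inv_left hS hcomm).eq, split, Matrix.mul_inv_rev,
      inv_Pmat, mul_assoc, ← mul_assoc (kron 1 _),
      kron_one_Umat_mul_inv hq hbi, Tr2_kron_one_mul, Tr2_Rtil_mul_kron_one_mul_Pmat, hVU,
      Matrix.mul_smul, mul_one]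

theorem enhancement_sufficient_def1_general (n : ℕ) (R : Mat2 n)
    (hQYB : QYB R) (hbi : Biinv R) (α : ℂ) (hα : α ≠ 0)
    (hVU : Vmat R * Umat R = (α ^ 2) • (1 : Mat1 n)) :
    IsEnhanced1 (Pmat n * R) (Umat R) α⁻¹ α ∧
    IsEnhanced1 (R * Pmat n) (Vmat R) α⁻¹ α := by
  refine ⟨isEnhanced1_Pmat_mul hQYB hbi hα hVU, ?_⟩
  have hUV := mul_eq_smul_one_comm (pow_ne_zero 2 hα) hVU
  have h := isEnhanced1_Pmat_mul hQYB.conj_Pmat hbi.conj_Pmat hα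
    (by rwa [Umat_conj_Pmat, Vmat_conj_Pmat])
  rwa [Pmat_mul_Pmat_mul_Pmat, Umat_conj_Pmat] at h

theorem enhancement_sufficient_def1 (n : ℕ) (hn : 1 ≤ n) (R : Mat2 n)
    (hQYB : QYB R) (hbi : Biinv R) (α : ℂ) (hα : α ≠ 0)
    (hVU : Vmat R * Umat R = (α ^ 2) • (1 : Mat1 n)) :
    IsEnhanced1 (Pmat n * R) (Umat R) α⁻¹ α ∧
    IsEnhanced1 (R * Pmat n) (Vmat R) α⁻¹ α :=
  enhancement_sufficient_def1_general n R hQYB hbi α hα hVU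

end

end Enhance
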